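/- If there exist constants ε>0 and C>0 such that every disk D(λ, ε e^{−Cp(λ)}), λ ∈ Λ, contains at most n points of Λ, then X^{n-1}_p(Λ) = X^n_p(Λ): every function on Λ with uniformly bounded divided differences of order n−1 (with respect to p) also has uniformly bounded divided differences of order n. -/

import Mathlib

/-!
Among `k + 2` distinct points of `Λ` at most `k + 1` lie in the disk `D(z₀, ε e^{-C p(z₀)})`,
so some node `z_j` is at distance at least `ε e^{-C p(z₀)}` from `z₀`. Divided differences are
symmetric in their nodes (Lagrange's formula), so the recursion may be run with `z₀` first and
`z_j` last: the order `k + 1` difference is a difference of two order `k` ones divided by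
`z_j - z₀`, which costs a factor `ε⁻¹ e^{C p(z₀)}`; as `p ≥ 0` this is absorbed into the weight.
-/

open Complex Metric Set

noncomputable def divDiff : (k : ℕ) → (ℂ → ℂ) → (Fin (k+1) → ℂ) → ℂ
  | 0, ω, z => ω (z 0)
  | k+1, ω, z =>
      (divDiff k ω (fun i => z i.succ) - divDiff k ω (fun i => z i.castSucc)) /
        (z (Fin.last (k+1)) - z 0)

/-- `p` is a weight on `ℂ`: nonnegative, `p(z) ≥ K log(1+|z|²)` for some `K > 0`,
and `p(z) ≤ D₀ p(w) + E₀` whenever `|z-w| ≤ 1`. -/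
def IsWeight (p : ℂ → ℝ) : Prop :=
  (∀ z, 0 ≤ p z) ∧
  (∃ K > 0, ∀ z : ℂ, K * Real.log (1 + ‖z‖ ^ 2) ≤ p z) ∧
  (∃ D > 0, ∃ E > 0, ∀ z w : ℂ, ‖z - w‖ ≤ 1 → p z ≤ D * p w + E)

/-- `ω ∈ X^k_p(Λ)`: the divided differences of order `k` (on `k+1` distinct points of `Λ`)
are uniformly bounded with respect to the weight `p`. -/
def MemX (p : ℂ → ℝ) (Λ : Set ℂ) (k : ℕ) (ω : ℂ → ℂ) : Prop :=
  ∃ A > 0, ∃ B > 0, ∀ z : Fin (k+1) → ℂ, (∀ i, z i ∈ Λ) → Function.Injective z →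
    ‖divDiff k ω z‖ ≤ A * Real.exp (B * ∑ i, p (z i))

/-- `f ∈ A_p`: `f` is entire with `|f(z)| ≤ A e^{B p(z)}` for some `A, B > 0`. -/
def MemAp (p : ℂ → ℝ) (f : ℂ → ℂ) : Prop :=
  Differentiable ℂ f ∧ ∃ A > 0, ∃ B > 0, ∀ z, ‖f z‖ ≤ A * Real.exp (B * p z)

/-- `Λ` is interpolating for `A_p`. -/
def Interpolating (p : ℂ → ℝ) (Λ : Set ℂ) : Prop :=
  ∀ ω : ℂ → ℂ, (∃ A > 0, ∃ B > 0, ∀ l ∈ Λ, ‖ω l‖ ≤ A * Real.exp (B * p l)) →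
    ∃ f, MemAp p f ∧ ∀ l ∈ Λ, f l = ω l

/-- Uniform interpolation bounds (Lemma 2.2.6 of Berenstein–Gay). -/
def UnifInterp (p : ℂ → ℝ) (Λ : Set ℂ) : Prop :=
  ∀ A > 0, ∀ B > 0, ∃ A' > 0, ∃ B' > 0, ∀ ω : ℂ → ℂ,
    (∀ l ∈ Λ, ‖ω l‖ ≤ A * Real.exp (B * p l)) →
    ∃ f, Differentiable ℂ f ∧ (∀ z, ‖f z‖ ≤ A' * Real.exp (B' * p z)) ∧
      ∀ l ∈ Λ, f l = ω l

/-- `Λ` is weakly separated: the disks `D(l, ε e^{-C p l})` are pairwise disjoint. -/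
def WeaklySeparated (p : ℂ → ℝ) (Λ : Set ℂ) : Prop :=
  ∃ ε > 0, ∃ C > 0, ∀ l ∈ Λ, ∀ m ∈ Λ, l ≠ m →
    Disjoint (ball l (ε * Real.exp (-C * p l))) (ball m (ε * Real.exp (-C * p m)))

/-- `Λ` has no accumulation points in `ℂ`. -/
def DiscreteSet (Λ : Set ℂ) : Prop := ∀ z : ℂ, ¬ AccPt z (Filter.principal Λ)

open Finset in
theorem Fin.prod_univ_erase_succ {M : Type*} [CommMonoid M] {n : ℕ} (f : Fin (n + 1) → M)
    (i : Fin n) : ∏ j ∈ univ.erase i.succ, f j = f 0 * ∏ j ∈ univ.erase i, f j.succ := by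
  have : univ.erase i.succ = Finset.cons 0 ((univ.erase i).map (Fin.succEmb n)) (by simp) := by
    ext j; cases j using Fin.cases <;> simp [eq_comm]
  rw [this, Finset.prod_cons, Finset.prod_map]
  rfl

open Finset in
theorem Fin.prod_univ_erase_castSucc {M : Type*} [CommMonoid M] {n : ℕ} (f : Fin (n + 1) → M)
    (i : Fin n) :
    ∏ j ∈ univ.erase i.castSucc, f j = f (Fin.last n) * ∏ j ∈ univ.erase i, f j.castSucc := by
  have : univ.erase i.castSucc =
      Finset.cons (Fin.last n) ((univ.erase i).map Fin.castSuccEmb) (by simp) := by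
    ext j; cases j using Fin.lastCases <;> simp [eq_comm]
  rw [this, Finset.prod_cons, Finset.prod_map]
  rfl

theorem Fintype.sum_comp_le_sum_of_injective {ι κ : Type*} [Fintype ι] [Fintype κ]
    {f : κ → ℝ} (hf : ∀ j, 0 ≤ f j) {e : ι → κ} (he : Function.Injective e) :
    ∑ i, f (e i) ≤ ∑ j, f j := by
  calc ∑ i, f (e i) = ∑ j ∈ Finset.univ.map ⟨e, he⟩, f j :=
        (Finset.sum_map Finset.univ ⟨e, he⟩ f).symm
    _ ≤ ∑ j, f j :=
      Finset.sum_le_sum_of_subset_of_nonneg (Finset.subset_univ _) fun j _ _ => hf j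

open Finset in
theorem divDiff_eq_sum (ω : ℂ → ℂ) {k : ℕ} {z : Fin (k + 1) → ℂ} (hz : Function.Injective z) :
    divDiff k ω z = ∑ i, ω (z i) / ∏ j ∈ univ.erase i, (z i - z j) := by
  induction k with
  | zero => simp [divDiff]
  | succ k ih =>
    set t : Fin (k + 2) → ℂ := fun i => ω (z i) / ∏ j ∈ univ.erase i, (z i - z j)
    have hsub {i j} (h : i ≠ j) : z i - z j ≠ 0 := sub_ne_zero.2 (hz.ne h)
    have h_tail : divDiff k ω (fun i => z i.succ) = ∑ i, t i * (z i - z 0) := by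
      rw [ih (z := fun i => z i.succ) (hz.comp (Fin.succ_injective _)),
        Fin.sum_univ_succ (f := fun i => t i * (z i - z 0)), sub_self, mul_zero, zero_add]
      refine sum_congr rfl fun i _ => ?_
      simp only [t, Fin.prod_univ_erase_succ]
      field_simp [hsub (Fin.succ_ne_zero i)]
    have h_init : divDiff k ω (fun i => z i.castSucc) = ∑ i, t i * (z i - z (Fin.last _)) := by
      rw [ih (z := fun i => z i.castSucc) (hz.comp (Fin.castSucc_injective _)),
        Fin.sum_univ_castSucc (f := fun i => t i * (z i - z (Fin.last _))), sub_self, mul_zero,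
        add_zero]
      refine sum_congr rfl fun i _ => ?_
      simp only [t, Fin.prod_univ_erase_castSucc]
      field_simp [hsub (Fin.castSucc_lt_last i).ne]
    rw [divDiff, h_tail, h_init, ← sum_sub_distrib,
      div_eq_iff (hsub (Fin.last_pos (n := k)).ne'), sum_mul]
    exact sum_congr rfl fun i _ => by ring

theorem divDiff_comp_perm (ω : ℂ → ℂ) {k : ℕ} {z : Fin (k + 1) → ℂ}
    (hz : Function.Injective z) (σ : Equiv.Perm (Fin (k + 1))) :
    divDiff k ω (z ∘ σ) = divDiff k ω z := by
  rw [divDiff_eq_sum ω (hz.comp σ.injective), divDiff_eq_sum ω hz]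
  refine Fintype.sum_equiv σ _ _ fun i => ?_
  have : (Finset.univ.erase i).map σ.toEmbedding = Finset.univ.erase (σ i) := by
    simp [Finset.map_erase]
  simp only [Function.comp_apply, ← this, Finset.prod_map, Equiv.toEmbedding_apply]

theorem divDiff_succ_eq_of_perm (ω : ℂ → ℂ) {k : ℕ} {z : Fin (k + 2) → ℂ}
    (hz : Function.Injective z) (σ : Equiv.Perm (Fin (k + 2))) :
    divDiff (k + 1) ω z =
      (divDiff k ω (z ∘ σ ∘ Fin.succ) - divDiff k ω (z ∘ σ ∘ Fin.castSucc)) /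
        (z (σ (Fin.last (k + 1))) - z (σ 0)) := by
  rw [← divDiff_comp_perm ω hz σ, divDiff]
  rfl

theorem exists_le_norm_sub_of_encard_le {E : Type*} [SeminormedAddCommGroup E] {Λ : Set E}
    {k : ℕ} {z : Fin (k + 2) → E} (hzΛ : ∀ i, z i ∈ Λ) (hz : Function.Injective z) {c : E}
    {r : ℝ} (hcard : (Λ ∩ ball c r).encard ≤ (k + 1 : ℕ)) : ∃ j, r ≤ ‖z j - c‖ := by
  by_contra! hnear
  have hrange : range z ⊆ Λ ∩ ball c r := by
    rintro _ ⟨i, rfl⟩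
    exact ⟨hzΛ i, mem_ball_iff_norm.2 (hnear i)⟩
  have := (encard_mono hrange).trans hcard
  rw [← image_univ, hz.injOn.encard_image, encard_univ, ENat.card_eq_coe_fintype_card,
    Fintype.card_fin] at this
  norm_cast at this
  omega

theorem norm_divDiff_succ_le (ω : ℂ → ℂ) {k : ℕ} {z : Fin (k + 2) → ℂ}
    (hz : Function.Injective z) {M r : ℝ} (hr : 0 < r) {j : Fin (k + 2)}
    (hj : r ≤ ‖z j - z 0‖)
    (hM : ∀ e : Fin (k + 1) → Fin (k + 2), Function.Injective e → ‖divDiff k ω (z ∘ e)‖ ≤ M) :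
    ‖divDiff (k + 1) ω z‖ ≤ 2 * M / r := by
  have hj0 : j ≠ 0 := by
    rintro rfl
    simp only [sub_self, norm_zero] at hj
    linarith
  have hM0 : 0 ≤ M := (norm_nonneg _).trans (hM _ (Fin.succ_injective _))
  set σ := Equiv.swap j (Fin.last (k + 1))
  have hσ0 : σ 0 = 0 := Equiv.swap_apply_of_ne_of_ne hj0.symm Fin.last_pos.ne
  rw [divDiff_succ_eq_of_perm ω hz σ, Equiv.swap_apply_right, hσ0, norm_div]
  refine div_le_div₀ (by positivity) ?_ hr hj
  calc _ ≤ ‖divDiff k ω (z ∘ σ ∘ Fin.succ)‖ + ‖divDiff k ω (z ∘ σ ∘ Fin.castSucc)‖ :=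
        norm_sub_le _ _
    _ ≤ M + M := add_le_add (hM _ (σ.injective.comp (Fin.succ_injective _)))
        (hM _ (σ.injective.comp (Fin.castSucc_injective _)))
    _ = 2 * M := by ring

theorem stmt6 (p : ℂ → ℝ) (hp : IsWeight p) (Λ : Set ℂ) (k : ℕ)
    (h : ∃ ε > 0, ∃ C > 0, ∀ l ∈ Λ,
      (Λ ∩ ball l (ε * Real.exp (-C * p l))).encard ≤ (k + 1 : ℕ)) :
    ∀ ω : ℂ → ℂ, MemX p Λ k ω → MemX p Λ (k+1) ω := by
  obtain ⟨ε, hε, C, hC, hcard⟩ := h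
  rintro ω ⟨A, hA, B, hB, hX⟩
  refine ⟨2 * A / ε, by positivity, B + C, by positivity, fun z hzΛ hz => ?_⟩
  set S := ∑ i, p (z i)
  have hp0 : ∀ i, 0 ≤ p (z i) := fun i => hp.1 (z i)
  have hsub (e : Fin (k + 1) → Fin (k + 2)) (he : Function.Injective e) :
      ‖divDiff k ω (z ∘ e)‖ ≤ A * Real.exp (B * S) := by
    refine (hX _ (fun i => hzΛ _) (hz.comp he)).trans ?_
    gcongr
    exact Fintype.sum_comp_le_sum_of_injective hp0 he
  have hpS : p (z 0) ≤ S := Finset.single_le_sum (fun i _ => hp0 i) (Finset.mem_univ 0)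
  obtain ⟨j, hj⟩ := exists_le_norm_sub_of_encard_le hzΛ hz (hcard (z 0) (hzΛ 0))
  calc ‖divDiff (k + 1) ω z‖ ≤ 2 * (A * Real.exp (B * S)) / (ε * Real.exp (-C * p (z 0))) :=
        norm_divDiff_succ_le ω hz (by positivity) hj hsub
    _ = 2 * A / ε * Real.exp (B * S + C * p (z 0)) := by
        rw [Real.exp_add, neg_mul, Real.exp_neg]
        field_simp
    _ ≤ 2 * A / ε * Real.exp ((B + C) * S) := by
        gcongr
        nlinarith
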